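/- Let R be an integral domain and I a nonzero principal proper ideal. Then the projective dimension of O₁ = {(0, i) : i ∈ I} over R ⋈ I is infinite; in particular, the global dimension of R ⋈ I is infinite. -/

import Mathlib

/-!
In `S = R ⋈ (a)` put `α = (0, a)` and `β = (a, 0)`. Then `O₁ = Sα`, `O₂ = Sβ`, and `α`, `β` are
exact zero-divisors: the annihilator of each is the ideal generated by the other. So multiplication
by `α` and by `β` give exact sequences `0 → Sβ → S → Sα → 0` and `0 → Sα → S → Sβ → 0`, and by
Schanuel's lemma `pd Sα ≤ n + 1` forces `pd Sβ ≤ n`, and symmetrically. Neither ideal is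
projective: a splitting of `S → Sα` would give `α ∈ α²S`, hence `a ∈ a²R`, making `a` a unit.
-/

set_option synthInstance.maxHeartbeats 1000000
set_option maxHeartbeats 1000000

/-- The amalgamated duplication of a ring `R` along an ideal `I`, as a subring of `R × R`. -/
def dup (R : Type*) [CommRing R] (I : Ideal R) : Subring (R × R) where
  carrier := {x | x.2 - x.1 ∈ I}
  zero_mem' := by simp
  one_mem' := by simp
  add_mem' := by
    intro a b ha hb
    show a.2 + b.2 - (a.1 + b.1) ∈ I
    have h : a.2 + b.2 - (a.1 + b.1) = (a.2 - a.1) + (b.2 - b.1) := by ring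
    rw [h]; exact I.add_mem ha hb
  neg_mem' := by
    intro a ha
    show -a.2 - -a.1 ∈ I
    have h : -a.2 - -a.1 = -(a.2 - a.1) := by ring
    rw [h]; exact I.neg_mem ha
  mul_mem' := by
    intro a b ha hb
    show a.2 * b.2 - a.1 * b.1 ∈ I
    have h : a.2 * b.2 - a.1 * b.1 = a.2 * (b.2 - b.1) + b.1 * (a.2 - a.1) := by ring
    rw [h]; exact I.add_mem (I.mul_mem_left _ hb) (I.mul_mem_left _ ha)

/-- The diagonal embedding `R → R ⋈ I`. -/
def diag (R : Type*) [CommRing R] (I : Ideal R) : R →+* dup R I where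
  toFun r := ⟨(r, r), show r - r ∈ I by simp⟩
  map_one' := rfl
  map_mul' _ _ := rfl
  map_zero' := rfl
  map_add' _ _ := rfl

/-- The first projection `R ⋈ I → R`. -/
def pr1 (R : Type u) [CommRing R] (I : Ideal R) : dup R I →+* R :=
  (RingHom.fst R R).comp (dup R I).subtype

/-- `pdLE R n M` means the projective dimension of `M` over `R` is at most `n`. -/
def pdLE (R : Type v) [Ring R] : ℕ → ∀ (M : Type u) [AddCommGroup M] [Module R M], Prop
  | 0 => fun M _ _ => Module.Projective R M
  | n + 1 => fun M _ _ =>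
      ∃ (P : Type u) (_ : AddCommGroup P) (_ : Module R P) (f : P →ₗ[R] M),
        Module.Projective R P ∧ Function.Surjective f ∧ pdLE R n (LinearMap.ker f)

/-- The projective dimension of `M` over `R`, as an element of `ℕ∞`. -/
noncomputable def projDim (R : Type v) [Ring R] (M : Type u) [AddCommGroup M]
    [Module R M] : ℕ∞ :=
  sInf {n : ℕ∞ | ∃ m : ℕ, n = m ∧ pdLE R m M}

/-- The global dimension of `R`: the supremum of the projective dimensions of all
`R`-modules (in the universe of `R`). -/
noncomputable def globalDim (R : Type u) [Ring R] : ℕ∞ :=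
  sSup {n : ℕ∞ | ∃ (M : Type u) (_ : AddCommGroup M) (_ : Module R M), projDim R M = n}

section Schanuel

variable {A K N Q : Type*} [Ring A] [AddCommGroup K] [AddCommGroup N] [AddCommGroup Q]
  [Module A K] [Module A N] [Module A Q]

theorem Function.Exact.nonempty_linearEquiv_prod [Module.Projective A Q] {i : K →ₗ[A] N}
    {g : N →ₗ[A] Q} (h : Function.Exact i g) (hi : Function.Injective i)
    (hg : Function.Surjective g) : Nonempty (N ≃ₗ[A] K × Q) :=
  let ⟨s, hs⟩ := Module.projective_lifting_property g LinearMap.id hg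
  ⟨(h.splitSurjectiveEquiv hi ⟨s, hs⟩).1⟩

variable {P P' M : Type*} [AddCommGroup P] [AddCommGroup P'] [AddCommGroup M]
  [Module A P] [Module A P'] [Module A M]

-- `ker (f.coprod f')` is the pullback of `f` and `-f'`; Schanuel's lemma splits it in two ways.
theorem LinearMap.nonempty_ker_coprod_equiv [Module.Projective A P'] {f : P →ₗ[A] M}
    (hf : Function.Surjective f) (f' : P' →ₗ[A] M) :
    Nonempty (LinearMap.ker (f.coprod f') ≃ₗ[A] LinearMap.ker f × P') := by
  let X := LinearMap.ker (f.coprod f')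
  let i : LinearMap.ker f →ₗ[A] X :=
    (LinearMap.inl A P P' ∘ₗ (LinearMap.ker f).subtype).codRestrict X fun k ↦ by simp [X]
  refine Function.Exact.nonempty_linearEquiv_prod (g := LinearMap.snd A P P' ∘ₗ X.subtype)
    (i := i) ?_ ?_ ?_
  · rintro ⟨⟨p, p'⟩, hpp'⟩
    simp only [LinearMap.coe_comp, Function.comp_apply, Submodule.coe_subtype, LinearMap.snd_apply]
    constructor
    · rintro rfl
      exact ⟨⟨p, by simpa using hpp'⟩, rfl⟩
    · rintro ⟨k, hk⟩
      exact congrArg (fun x : X ↦ (x : P × P').2) hk.symm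
  · intro k k' h
    exact Subtype.ext (congrArg (fun x : X ↦ (x : P × P').1) h)
  · intro p'
    obtain ⟨p, hp⟩ := hf (-f' p')
    exact ⟨⟨(p, p'), by simp [hp]⟩, rfl⟩

theorem schanuel [Module.Projective A P] [Module.Projective A P'] {f : P →ₗ[A] M}
    {f' : P' →ₗ[A] M} (hf : Function.Surjective f) (hf' : Function.Surjective f') :
    Nonempty ((LinearMap.ker f × P') ≃ₗ[A] (LinearMap.ker f' × P)) := by
  obtain ⟨e⟩ := LinearMap.nonempty_ker_coprod_equiv hf f'
  obtain ⟨e'⟩ := LinearMap.nonempty_ker_coprod_equiv hf' f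
  have hswap : (LinearMap.ker (f.coprod f')).map
      (LinearEquiv.prodComm A P P' : P × P' →ₗ[A] P' × P) = LinearMap.ker (f'.coprod f) := by
    ext ⟨p', p⟩
    simp [Submodule.mem_map_equiv, add_comm]
  exact ⟨e.symm ≪≫ₗ (LinearEquiv.prodComm A P P').ofSubmodules _ _ hswap ≪≫ₗ e'⟩

end Schanuel

namespace pdLE

variable {A : Type v} [Ring A] {M N Q : Type u} [AddCommGroup M] [AddCommGroup N]
  [AddCommGroup Q] [Module A M] [Module A N] [Module A Q]

theorem of_equiv {n : ℕ} (e : M ≃ₗ[A] N) (h : pdLE A n M) : pdLE A n N := by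
  induction n generalizing M N with
  | zero =>
    have : Module.Projective A M := h
    exact Module.Projective.of_equiv e
  | succ n ih =>
    obtain ⟨P, _, _, f, hP, hf, hk⟩ := h
    refine ⟨P, _, _, e.toLinearMap ∘ₗ f, hP, e.surjective.comp hf, ih ?_ hk⟩
    exact LinearEquiv.ofEq _ _ (LinearMap.ker_comp_of_ker_eq_bot f e.ker).symm

theorem prod_projective [Module.Projective A Q] {n : ℕ} (h : pdLE A n M) :
    pdLE A n (M × Q) := by
  induction n generalizing M with
  | zero =>
    have : Module.Projective A M := h
    exact inferInstanceAs (Module.Projective A (M × Q))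
  | succ n ih =>
    obtain ⟨P, _, _, f, hP, hf, hk⟩ := h
    refine ⟨P × Q, _, _, f.prodMap LinearMap.id, inferInstance,
      Prod.map_surjective.2 ⟨hf, Function.surjective_id⟩, hk.of_equiv ?_⟩
    let i : LinearMap.ker f →ₗ[A] P × Q := LinearMap.inl A P Q ∘ₗ (LinearMap.ker f).subtype
    have hi : Function.Injective i := fun k k' h ↦ Subtype.ext (congrArg Prod.fst h)
    refine LinearEquiv.ofInjective i hi ≪≫ₗ LinearEquiv.ofEq _ _ ?_
    ext ⟨p, q⟩
    simp [i, eq_comm]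

theorem of_prod_projective [Module.Projective A Q] {n : ℕ} (h : pdLE A n (M × Q)) :
    pdLE A n M := by
  cases n with
  | zero =>
    have : Module.Projective A (M × Q) := h
    exact Module.Projective.of_split (LinearMap.inl A M Q) (LinearMap.fst A M Q) rfl
  | succ n =>
    obtain ⟨P, _, _, f, hP, hf, hk⟩ := h
    let f₁ := LinearMap.fst A M Q ∘ₗ f
    let i := Submodule.inclusion (LinearMap.ker_le_ker_comp f (LinearMap.fst A M Q))
    let g := LinearMap.snd A M Q ∘ₗ f ∘ₗ (LinearMap.ker f₁).subtype
    have hexact : Function.Exact i g := by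
      intro x
      constructor
      · exact fun h2 ↦ ⟨⟨x, Prod.ext x.2 h2⟩, rfl⟩
      · rintro ⟨k, rfl⟩
        simp [g, i]
    have hg : Function.Surjective g := by
      intro q
      obtain ⟨p, hp⟩ := hf (0, q)
      exact ⟨⟨p, by simp [f₁, hp]⟩, by simp [g, hp]⟩
    obtain ⟨e⟩ := hexact.nonempty_linearEquiv_prod (Submodule.inclusion_injective _) hg
    exact ⟨P, _, _, f₁, hP, Prod.fst_surjective.comp hf, hk.prod_projective.of_equiv e.symm⟩

theorem ker_of_surjective {P : Type u} [AddCommGroup P] [Module A P] [Module.Projective A P]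
    {f : P →ₗ[A] M} (hf : Function.Surjective f) {n : ℕ} (h : pdLE A (n + 1) M) :
    pdLE A n (LinearMap.ker f) := by
  obtain ⟨P', _, _, f', hP', hf', hk⟩ := h
  obtain ⟨e⟩ := schanuel hf' hf
  exact (hk.prod_projective.of_equiv e).of_prod_projective

end pdLE

theorem projDim_eq_top_of_forall_not_pdLE {A : Type v} [Ring A] {M : Type u} [AddCommGroup M]
    [Module A M] (h : ∀ n, ¬ pdLE A n M) : projDim A M = ⊤ :=
  sInf_eq_top.2 fun _ ⟨n, _, hn⟩ ↦ (h n hn).elim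

theorem globalDim_eq_top_of_projDim_eq_top {A M : Type u} [Ring A] [AddCommGroup M]
    [Module A M] (h : projDim A M = ⊤) : globalDim A = ⊤ :=
  top_le_iff.1 (h ▸ le_sSup ⟨M, _, _, rfl⟩)

section ExactZeroDivisors

open Ideal

variable {S : Type u} [CommRing S]

def toSpanSingletonIdeal (x : S) : S →ₗ[S] span {x} :=
  LinearMap.toSpanSingleton S _ ⟨x, mem_span_singleton_self x⟩

theorem toSpanSingletonIdeal_surjective (x : S) : Function.Surjective (toSpanSingletonIdeal x) :=
  fun z ↦
    let ⟨c, hc⟩ := mem_span_singleton'.1 z.2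
    ⟨c, Subtype.ext hc⟩

theorem ker_toSpanSingletonIdeal {x y : S} (h : ∀ z, z * x = 0 ↔ z ∈ span {y}) :
    LinearMap.ker (toSpanSingletonIdeal x) = span {y} := by
  ext z
  rw [← h, LinearMap.mem_ker, ← Subtype.coe_inj]
  rfl

theorem not_projective_span_singleton {x y : S} (hyx : y * x = 0)
    (hann : ∀ z, z * y = 0 → z ∈ span {x}) (hx : x ∉ span {x ^ 2}) :
    ¬ Module.Projective S (span {x}) := by
  intro
  obtain ⟨s, hs⟩ := Module.projective_lifting_property (toSpanSingletonIdeal x) LinearMap.id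
    (toSpanSingletonIdeal_surjective x)
  obtain ⟨e, he_def⟩ : ∃ e, s ⟨x, mem_span_singleton_self x⟩ = e := ⟨_, rfl⟩
  have he : e * x = x := he_def ▸ congrArg Subtype.val (LinearMap.congr_fun hs _)
  have hye : e * y = 0 := by
    have : y • (⟨x, mem_span_singleton_self x⟩ : span {x}) = 0 := Subtype.ext hyx
    rw [← he_def, mul_comm, ← smul_eq_mul, ← map_smul, this, map_zero]
  obtain ⟨c, rfl⟩ := mem_span_singleton'.1 (hann e hye)
  exact hx (mem_span_singleton'.2 ⟨c, by rw [pow_two, ← mul_assoc, he]⟩)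

theorem not_pdLE_span_singleton (n : ℕ) {x y : S} (hxy : ∀ z, z * x = 0 ↔ z ∈ span {y})
    (hyx : ∀ z, z * y = 0 ↔ z ∈ span {x}) (hx : x ∉ span {x ^ 2}) (hy : y ∉ span {y ^ 2}) :
    ¬ pdLE S n (span {x}) := by
  induction n generalizing x y with
  | zero =>
    exact not_projective_span_singleton ((hxy y).2 (mem_span_singleton_self y))
      (fun z ↦ (hyx z).1) hx
  | succ n ih =>
    intro h
    have := h.ker_of_surjective (toSpanSingletonIdeal_surjective x)
    rw [ker_toSpanSingletonIdeal hxy] at this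
    exact ih hyx hxy hy hx this

end ExactZeroDivisors

theorem Ideal.notMem_span_sq_of_map {S T : Type*} [CommRing S] [CommRing T] (f : S →+* T)
    {x : S} (h : f x ∉ Ideal.span {f x ^ 2}) : x ∉ Ideal.span {x ^ 2} := fun hx ↦
  h (by simpa [Ideal.map_span] using Ideal.mem_map_of_mem f hx)

theorem Ideal.notMem_span_sq {R : Type*} [CommRing R] [IsDomain R] {a : R} (ha : a ≠ 0)
    (hu : ¬IsUnit a) : a ∉ Ideal.span {a ^ 2} := by
  rw [Ideal.mem_span_singleton, ← pow_one a, ← pow_mul, pow_dvd_pow_iff ha hu]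
  omega

def pr2 (R : Type u) [CommRing R] (I : Ideal R) : dup R I →+* R :=
  (RingHom.snd R R).comp (dup R I).subtype

section Duplication

open Ideal

variable {R : Type u} [CommRing R]

@[simp]
theorem coe_diag {I : Ideal R} (r : R) : (diag R I r : R × R) = (r, r) := rfl

@[simp]
theorem pr1_apply {I : Ideal R} (z : dup R I) : pr1 R I z = (z : R × R).1 := rfl

@[simp]
theorem pr2_apply {I : Ideal R} (z : dup R I) : pr2 R I z = (z : R × R).2 := rfl

variable (a : R)

def genO1 : dup R (span {a}) :=
  ⟨(0, a), show a - 0 ∈ span {a} by rw [sub_zero]; exact mem_span_singleton_self a⟩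

def genO2 : dup R (span {a}) :=
  ⟨(a, 0), show 0 - a ∈ span {a} by rw [zero_sub, neg_mem_iff]; exact mem_span_singleton_self a⟩

@[simp]
theorem coe_genO1 : (genO1 a : R × R) = (0, a) := rfl

@[simp]
theorem coe_genO2 : (genO2 a : R × R) = (a, 0) := rfl

theorem ker_pr1_eq_span_genO1 : RingHom.ker (pr1 R (span {a})) = span {genO1 a} := by
  ext z
  rw [RingHom.mem_ker, mem_span_singleton', pr1_apply]
  constructor
  · intro hz
    obtain ⟨c, hc⟩ := mem_span_singleton'.1 (show z.1.2 - z.1.1 ∈ span {a} from z.2)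
    exact ⟨diag R _ c, Subtype.ext (Prod.ext (by simp [hz]) (by simp [hz, hc]))⟩
  · rintro ⟨c, rfl⟩
    simp

theorem ker_pr2_eq_span_genO2 : RingHom.ker (pr2 R (span {a})) = span {genO2 a} := by
  ext z
  rw [RingHom.mem_ker, mem_span_singleton', pr2_apply]
  constructor
  · intro hz
    obtain ⟨c, hc⟩ := mem_span_singleton'.1 (show z.1.2 - z.1.1 ∈ span {a} from z.2)
    exact ⟨diag R _ (-c), Subtype.ext (Prod.ext (by simp [hz, hc]) (by simp [hz]))⟩
  · rintro ⟨c, rfl⟩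
    simp

variable [IsDomain R] {a}

theorem mul_genO1_eq_zero_iff (ha : a ≠ 0) (z : dup R (span {a})) :
    z * genO1 a = 0 ↔ z ∈ span {genO2 a} := by
  rw [← ker_pr2_eq_span_genO2, RingHom.mem_ker]
  simp [Subtype.ext_iff, Prod.ext_iff, ha]

theorem mul_genO2_eq_zero_iff (ha : a ≠ 0) (z : dup R (span {a})) :
    z * genO2 a = 0 ↔ z ∈ span {genO1 a} := by
  rw [← ker_pr1_eq_span_genO1, RingHom.mem_ker]
  simp [Subtype.ext_iff, Prod.ext_iff, ha]

end Duplication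

/-- if `R` is a domain and `I = Ra ≠ 0` is a principal proper ideal, then
`pd_{R ⋈ I}(O₁) = ∞` where `O₁ = ker π₁ = {(0,i) : i ∈ I}`; in particular
`gldim(R ⋈ I) = ∞`. -/
theorem projDim_O1_eq_top (R : Type u) [CommRing R] [IsDomain R] (I : Ideal R) (a : R)
    (ha : I = Ideal.span {a}) (hne : I ≠ ⊥) (hI : I ≠ ⊤) :
    projDim (dup R I) (RingHom.ker (pr1 R I)) = ⊤ ∧ globalDim (dup R I) = ⊤ := by
  subst ha
  have ha0 : a ≠ 0 := fun h ↦ hne (by simp [h])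
  have hu : ¬IsUnit a := fun h ↦ hI (Ideal.span_singleton_eq_top.2 h)
  have hproj : projDim (dup R (Ideal.span {a})) (RingHom.ker (pr1 R (Ideal.span {a}))) = ⊤ := by
    rw [ker_pr1_eq_span_genO1]
    exact projDim_eq_top_of_forall_not_pdLE fun n ↦ not_pdLE_span_singleton n
      (mul_genO1_eq_zero_iff ha0) (mul_genO2_eq_zero_iff ha0)
      (Ideal.notMem_span_sq_of_map (pr2 R _) (Ideal.notMem_span_sq ha0 hu))
      (Ideal.notMem_span_sq_of_map (pr1 R _) (Ideal.notMem_span_sq ha0 hu))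
  exact ⟨hproj, globalDim_eq_top_of_projDim_eq_top hproj⟩
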